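/- arXiv:2302.08737 — 8 statements merged into one kernel-verified Lean document; each statement's English description precedes it below -/
import Mathlib

section
/- The trilinear map Q² satisfies the two naturality conditions Q²(x, y, φz) − Q²(x, φy, z) = F(x, y, z) and Q²(x, y, z) = −Q²(x, z, y) for all x, y, z ∈ V; hence Q² is the potential of a natural connection (the second natural connection) on the Riemannian Π-structure. -/
open scoped RealInnerProductSpace

noncomputable section

variable {V : Type*} [NormedAddCommGroup V] [InnerProductSpace ℝ V]

/-- A Riemannian Π-structure on a real inner product space `V`:
a linear map `phi`, a vector `xi` (with dual form `η x = ⟪x, xi⟫`) satisfying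
the defining algebraic identities. -/
structure PiStruct (V : Type*) [NormedAddCommGroup V] [InnerProductSpace ℝ V] where
  phi : V →ₗ[ℝ] V
  xi : V
  phi_xi : phi xi = 0
  phi_phi : ∀ x : V, phi (phi x) = x - (⟪x, xi⟫ : ℝ) • xi
  eta_phi : ∀ x : V, ⟪phi x, xi⟫ = 0
  eta_xi : ⟪xi, xi⟫ = (1 : ℝ)
  g_phi_phi : ∀ x y : V, ⟪phi x, phi y⟫ = ⟪x, y⟫ - ⟪x, xi⟫ * ⟪y, xi⟫
  g_phi_symm : ∀ x y : V, ⟪phi x, y⟫ = ⟪x, phi y⟫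

/-- Trilinear real-valued maps on `V`. -/
abbrev Tri (V : Type*) [NormedAddCommGroup V] [InnerProductSpace ℝ V] :=
  V →ₗ[ℝ] V →ₗ[ℝ] V →ₗ[ℝ] ℝ

/-- The 1-form `η(x) = g(x, ξ)`. -/
def PiStruct.eta (P : PiStruct V) (x : V) : ℝ := ⟪x, P.xi⟫

/-- `F` is a fundamental tensor for the Π-structure `P`. -/
def IsFund (P : PiStruct V) (F : Tri V) : Prop :=
  (∀ x y z : V, F x y z = F x z y) ∧
  (∀ x y z : V, F x y z =
    -F x (P.phi y) (P.phi z) + P.eta y * F x P.xi z + P.eta z * F x y P.xi)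

/-- The Nijenhuis tensor of `F`. -/
def Nij (P : PiStruct V) (F : Tri V) (x y z : V) : ℝ :=
  F (P.phi x) y z - F (P.phi y) x z - F x y (P.phi z) + F y x (P.phi z)
    + P.eta z * (F x (P.phi y) P.xi - F y (P.phi x) P.xi)

/-- The potential of the first natural connection. -/
def Q1 (P : PiStruct V) (F : Tri V) (x y z : V) : ℝ :=
  -(1/2) * F x (P.phi y) z - (1/2) * P.eta z * F x (P.phi y) P.xi
    + P.eta y * F x (P.phi z) P.xi

/-- The potential of the second natural connection. -/
def Q2 (P : PiStruct V) (F : Tri V) (x y z : V) : ℝ :=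
  Q1 P F x y z - (1/8) * (Nij P F (P.phi (P.phi z)) (P.phi (P.phi y)) (P.phi (P.phi x))
    + 2 * P.eta x * Nij P F (P.phi z) (P.phi y) P.xi)

/-- The torsion tensor of the first natural connection. -/
def T1 (P : PiStruct V) (F : Tri V) (x y z : V) : ℝ :=
  -(1/2) * (F x (P.phi y) z - F y (P.phi x) z)
    - (1/2) * P.eta z * (F x (P.phi y) P.xi - F y (P.phi x) P.xi)
    + P.eta y * F x (P.phi z) P.xi - P.eta x * F y (P.phi z) P.xi

/-- The torsion tensor of the second natural connection. -/
def T2 (P : PiStruct V) (F : Tri V) (x y z : V) : ℝ :=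
  Q2 P F x y z - Q2 P F y x z

/-- Identity (*) for a torsion-like tensor `T`. -/
def StarId (P : PiStruct V) (T : V → V → V → ℝ) : Prop :=
  ∀ x y z : V,
    T x y z + T y z x + T (P.phi x) y (P.phi z) + T y (P.phi z) (P.phi x)
    - P.eta x * (T P.xi y z + T y z P.xi - P.eta y * T P.xi z P.xi)
    - P.eta y * (T x P.xi z + T P.xi z x + T (P.phi x) P.xi (P.phi z)
        + T P.xi (P.phi z) (P.phi x))
    - P.eta z * (T x y P.xi + T y P.xi x - P.eta y * T x P.xi P.xi) = 0

/-! `Q²` is `Q¹ - (1/8) S` with `S x y z = N(φ²z, φ²y, φ²x) + 2 η(x) N(φz, φy, ξ)`. Both naturality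
conditions are affine in the potential, with homogeneous parts `S x y (φz) = S x (φy) z` and
`S x y z = -S x z y`, so it suffices that `Q¹` is natural (a direct consequence of the defining
identity of `F`) and that `S` solves the homogeneous conditions. Skew-symmetry of `S` comes from that
of `N` in its first two arguments; the other condition follows from `φ³ = φ` and the fact that `φ`
can be moved between the first two arguments of `N` when both lie in the image of `φ`. -/

namespace PiStruct

variable (P : PiStruct V)

@[simp]
lemma eta_phi_apply (x : V) : P.eta (P.phi x) = 0 := P.eta_phi x

@[simp]
lemma eta_xi_self : P.eta P.xi = 1 := P.eta_xi

@[simp]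
lemma phi_phi_phi (x : V) : P.phi (P.phi (P.phi x)) = P.phi x := by
  rw [P.phi_phi (P.phi x), P.eta_phi, zero_smul, sub_zero]

lemma apply_phi_phi_mid (F : Tri V) (x y z : V) :
    F x (P.phi (P.phi y)) z = F x y z - P.eta y * F x P.xi z := by
  simp [P.phi_phi, PiStruct.eta]

lemma apply_phi_phi_right (F : Tri V) (x y z : V) :
    F x y (P.phi (P.phi z)) = F x y z - P.eta z * F x y P.xi := by
  simp [P.phi_phi, PiStruct.eta]

end PiStruct

namespace IsFund

variable {P : PiStruct V} {F : Tri V}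

lemma symm (hF : IsFund P F) (x y z : V) : F x y z = F x z y := hF.1 x y z

lemma apply_phi_phi (hF : IsFund P F) (x y z : V) :
    F x (P.phi y) (P.phi z) = -F x y z + P.eta y * F x P.xi z + P.eta z * F x y P.xi := by
  linarith [hF.2 x y z]

lemma apply_xi_xi (hF : IsFund P F) (x : V) : F x P.xi P.xi = 0 := by
  have h := hF.apply_phi_phi x P.xi P.xi
  simp only [P.phi_xi, map_zero, P.eta_xi_self, one_mul] at h
  linarith

lemma apply_phi_phi_xi (hF : IsFund P F) (x y : V) : F x (P.phi (P.phi y)) P.xi = F x y P.xi := by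
  rw [P.apply_phi_phi_mid, hF.apply_xi_xi, mul_zero, sub_zero]

lemma apply_phi_phi_add (hF : IsFund P F) (x y z : V) :
    F x (P.phi y) (P.phi z) + F x (P.phi (P.phi y)) z = P.eta z * F x y P.xi := by
  rw [hF.apply_phi_phi, P.apply_phi_phi_mid]
  ring

lemma apply_phi_add_apply_phi (hF : IsFund P F) (x y z : V) :
    F x y (P.phi z) + F x (P.phi y) z =
      P.eta y * F x P.xi (P.phi z) + P.eta z * F x (P.phi y) P.xi := by
  have h := hF.apply_phi_phi x y (P.phi z)
  rw [P.apply_phi_phi_right, P.eta_phi_apply] at h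
  linarith

end IsFund

def IsNaturalPotential (P : PiStruct V) (F : Tri V) (Q : V → V → V → ℝ) : Prop :=
  (∀ x y z : V, Q x y (P.phi z) - Q x (P.phi y) z = F x y z) ∧
    ∀ x y z : V, Q x y z = -Q x z y

section

variable {P : PiStruct V} {F : Tri V}

lemma IsNaturalPotential.sub_mul_of_phi_comm_of_antisymm {Q S : V → V → V → ℝ}
    (hQ : IsNaturalPotential P F Q) (hS_phi : ∀ x y z, S x y (P.phi z) = S x (P.phi y) z)
    (hS_antisymm : ∀ x y z, S x y z = -S x z y) (c : ℝ) :
    IsNaturalPotential P F (fun x y z => Q x y z - c * S x y z) := by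
  refine ⟨fun x y z => ?_, fun x y z => ?_⟩
  · linear_combination hQ.1 x y z - c * hS_phi x y z
  · linear_combination hQ.2 x y z - c * hS_antisymm x y z

lemma Q1_isNaturalPotential (hF : IsFund P F) : IsNaturalPotential P F (Q1 P F) := by
  refine ⟨fun x y z => ?_, fun x y z => ?_⟩
  · simp only [Q1, PiStruct.eta_phi_apply, P.apply_phi_phi_mid, hF.apply_xi_xi]
    linear_combination (-1/2 : ℝ) * hF.apply_phi_phi x y z + P.eta y * hF.symm x z P.xi
  · simp only [Q1]
    linear_combination (-1/2 : ℝ) * hF.apply_phi_add_apply_phi x y z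
      - (1/2 : ℝ) * hF.symm x (P.phi z) y - (1/2 : ℝ) * P.eta y * hF.symm x P.xi (P.phi z)

variable (P F) in
lemma Nij_antisymm (x y z : V) : Nij P F x y z = -Nij P F y x z := by
  unfold Nij
  ring

lemma Nij_phi_phi_phi_comm (hF : IsFund P F) (x y z : V) :
    Nij P F (P.phi x) (P.phi (P.phi y)) z = Nij P F (P.phi (P.phi x)) (P.phi y) z := by
  have hx := hF.apply_phi_phi_add (P.phi x) (P.phi y) z
  have hy := hF.apply_phi_phi_add (P.phi y) (P.phi x) z
  simp only [PiStruct.phi_phi_phi] at hx hy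
  simp only [Nij, PiStruct.phi_phi_phi]
  linear_combination hF.apply_phi_phi_add (P.phi (P.phi x)) y z - hx - hy
    + hF.apply_phi_phi_add (P.phi (P.phi y)) x z
    - P.eta z * (hF.apply_phi_phi_xi (P.phi (P.phi x)) y + hF.apply_phi_phi_xi (P.phi (P.phi y)) x)

variable (P F) in
def Q2Correction (x y z : V) : ℝ :=
  Nij P F (P.phi (P.phi z)) (P.phi (P.phi y)) (P.phi (P.phi x))
    + 2 * P.eta x * Nij P F (P.phi z) (P.phi y) P.xi

lemma Q2Correction_phi_comm (hF : IsFund P F) (x y z : V) :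
    Q2Correction P F x y (P.phi z) = Q2Correction P F x (P.phi y) z := by
  simp only [Q2Correction, PiStruct.phi_phi_phi, Nij_phi_phi_phi_comm hF]

variable (P F) in
lemma Q2Correction_antisymm (x y z : V) : Q2Correction P F x y z = -Q2Correction P F x z y := by
  simp only [Q2Correction, Nij_antisymm P F (P.phi (P.phi z)), Nij_antisymm P F (P.phi z)]
  ring

end

theorem Q2_is_natural_potential_general
    (P : PiStruct V) (F : Tri V) (hF : IsFund P F) :
    (∀ x y z : V, Q2 P F x y (P.phi z) - Q2 P F x (P.phi y) z = F x y z) ∧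
    (∀ x y z : V, Q2 P F x y z = -Q2 P F x z y) :=
  (Q1_isNaturalPotential hF).sub_mul_of_phi_comm_of_antisymm (Q2Correction_phi_comm hF)
    (Q2Correction_antisymm P F) (1/8)

/-- `Q²` satisfies the two naturality conditions, hence is the potential of a
natural connection (the second natural connection). -/
theorem Q2_is_natural_potential
    [FiniteDimensional ℝ V] (n : ℕ) (hn : 1 ≤ n)
    (hdim : Module.finrank ℝ V = 2 * n + 1)
    (P : PiStruct V) (F : Tri V) (hF : IsFund P F) :
    (∀ x y z : V, Q2 P F x y (P.phi z) - Q2 P F x (P.phi y) z = F x y z) ∧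
    (∀ x y z : V, Q2 P F x y z = -Q2 P F x z y) :=
  Q2_is_natural_potential_general P F hF
end
end

section
/- The first and second natural connections coincide if and only if N(φx, φy, z) = 0 for all x, y, z ∈ V; that is, Q²(x,y,z) = Q¹(x,y,z) for all x, y, z ∈ V if and only if N(φx, φy, z) = 0 for all x, y, z ∈ V. -/
open scoped RealInnerProductSpace

noncomputable section

variable {V : Type*} [NormedAddCommGroup V] [InnerProductSpace ℝ V]

/-- the first and the second natural connections coincide iff `N(φ·, φ·, ·) = 0`. -/
theorem first_eq_second_iff_N_phi_phi_zero
    [FiniteDimensional ℝ V] (n : ℕ) (hn : 1 ≤ n)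
    (hdim : Module.finrank ℝ V = 2 * n + 1)
    (P : PiStruct V) (F : Tri V) (hF : IsFund P F) :
    (∀ x y z : V, Q2 P F x y z = Q1 P F x y z) ↔
      (∀ x y z : V, Nij P F (P.phi x) (P.phi y) z = 0) := by
  have hlin : ∀ a b u : V, ∀ t : ℝ,
      Nij P F a b (u + t • P.xi) = Nij P F a b u + t * Nij P F a b P.xi := by
    intro a b u t
    simp [Nij, PiStruct.eta, map_add, map_smul, inner_add_left, inner_smul_left,
      P.eta_xi, P.phi_xi, smul_eq_mul]
    ring
  have hphi3 : ∀ x : V, P.phi (P.phi (P.phi x)) = P.phi x := by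
    intro x
    rw [P.phi_phi (P.phi x), P.eta_phi]
    simp
  constructor
  · intro h
    have hE : ∀ x y z : V, Nij P F (P.phi (P.phi z)) (P.phi (P.phi y)) (P.phi (P.phi x))
        + 2 * P.eta x * Nij P F (P.phi z) (P.phi y) P.xi = 0 := by
      intro x y z
      have := h x y z
      simp only [Q2] at this
      linarith
    have hNxi : ∀ y z : V, Nij P F (P.phi z) (P.phi y) P.xi = 0 := by
      intro y z
      have h0 := hE P.xi y z
      rw [P.phi_xi] at h0
      have hxi : ‖P.xi‖ ^ 2 = 1 := by
        have := P.eta_xi; rw [real_inner_self_eq_norm_sq] at this; exact this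
      simp [Nij, PiStruct.eta, P.eta_xi, P.phi_xi, hxi] at h0 ⊢
      linarith
    have hE2 : ∀ x y z : V,
        Nij P F (P.phi (P.phi z)) (P.phi (P.phi y)) (P.phi (P.phi x)) = 0 := by
      intro x y z
      have := hE x y z
      rw [hNxi y z] at this
      linarith
    intro x y z
    have hz : P.phi (P.phi z) + (⟪z, P.xi⟫ : ℝ) • P.xi = z := by
      rw [P.phi_phi]; abel
    have key : Nij P F (P.phi x) (P.phi y) (P.phi (P.phi z)) = 0 := by
      have := hE2 z (P.phi y) (P.phi x)
      rwa [hphi3 x, hphi3 y] at this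
    calc Nij P F (P.phi x) (P.phi y) z
        = Nij P F (P.phi x) (P.phi y) (P.phi (P.phi z) + (⟪z, P.xi⟫ : ℝ) • P.xi) := by
          rw [hz]
      _ = Nij P F (P.phi x) (P.phi y) (P.phi (P.phi z))
            + ⟪z, P.xi⟫ * Nij P F (P.phi x) (P.phi y) P.xi := hlin _ _ _ _
      _ = 0 := by rw [key, hNxi y x]; ring
  · intro h x y z
    simp only [Q2]
    rw [show P.phi (P.phi z) = P.phi (P.phi z) from rfl]
    have h1 : Nij P F (P.phi (P.phi z)) (P.phi (P.phi y)) (P.phi (P.phi x)) = 0 :=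
      h (P.phi z) (P.phi y) (P.phi (P.phi x))
    have h2 : Nij P F (P.phi z) (P.phi y) P.xi = 0 := h z y P.xi
    rw [h1, h2]; ring
end
end

section
/- If the fundamental tensor F satisfies the defining condition of class F₉, then the torsion tensor T¹ of the first natural connection satisfies T¹(x,y,z) = η(x)T¹(ξ,y,z) − η(y)T¹(ξ,x,z) and T¹(ξ,y,z) = T¹(ξ,z,y) = −T¹(ξ,φy,φz) for all x, y, z ∈ V. -/
/-!
In the class F₉ everything is governed by the form `ω(x, y) = F(x, φy, ξ)`. Since `F(·, ·, ξ)` is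
skew and invariant under `φ × φ`, and `φ² = id` modulo `ξ` with `F(x, ξ, ξ) = 0`, the form `ω` is
symmetric and `ω(ξ, ·) = 0`. Substituting the F₉ decomposition of `F` into `T¹` gives
`T¹(x, y, z) = η(y) ω(x, z) - η(x) ω(y, z)`, so `T¹(ξ, y, z) = -ω(y, z)`, and the three
identities follow from the symmetry and `φ`-invariance of `ω`.
-/

open scoped RealInnerProductSpace

noncomputable section

variable {V : Type*} [NormedAddCommGroup V] [InnerProductSpace ℝ V]

/-- The defining condition of the basic class F₉. -/
def ClassF9 (P : PiStruct V) (F : Tri V) : Prop :=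
  (∀ x y z : V, F x y z = F x y P.xi * P.eta z + F x z P.xi * P.eta y) ∧
  (∀ x y : V, F x y P.xi = -F y x P.xi) ∧
  (∀ x y : V, F x y P.xi = -F (P.phi x) (P.phi y) P.xi)

namespace ClassF9

variable {P : PiStruct V} {F : Tri V}

theorem apply_xi_xi (h : ClassF9 P F) (x : V) : F x P.xi P.xi = 0 := by
  simpa [P.phi_xi] using h.2.2 x P.xi

theorem apply_phi_phi_xi (h : ClassF9 P F) (x y : V) :
    F x (P.phi (P.phi y)) P.xi = F x y P.xi := by
  simp [P.phi_phi, h.apply_xi_xi]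

theorem apply_phi_xi_comm (h : ClassF9 P F) (x y : V) :
    F x (P.phi y) P.xi = F y (P.phi x) P.xi := by
  rw [h.2.2, h.apply_phi_phi_xi, h.2.1, neg_neg]

theorem apply_xi_phi_xi (h : ClassF9 P F) (z : V) : F P.xi (P.phi z) P.xi = 0 := by
  rw [h.apply_phi_xi_comm, P.phi_xi, map_zero, LinearMap.zero_apply]

theorem T1_eq (h : ClassF9 P F) (x y z : V) :
    T1 P F x y z = P.eta y * F x (P.phi z) P.xi - P.eta x * F y (P.phi z) P.xi := by
  have hx := h.1 x (P.phi y) z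
  have hy := h.1 y (P.phi x) z
  simp only [PiStruct.eta, P.eta_phi, mul_zero, add_zero] at hx hy
  rw [T1, hx, hy, h.apply_phi_xi_comm x y]
  ring

theorem T1_xi_left (h : ClassF9 P F) (y z : V) :
    T1 P F P.xi y z = -F y (P.phi z) P.xi := by
  rw [h.T1_eq, h.apply_xi_phi_xi, PiStruct.eta, PiStruct.eta, P.eta_xi]
  ring

end ClassF9

theorem classF9_T1_properties_general
    (P : PiStruct V) (F : Tri V)
    (h9 : ClassF9 P F) :
    (∀ x y z : V, T1 P F x y z =
      P.eta x * T1 P F P.xi y z - P.eta y * T1 P F P.xi x z) ∧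
    (∀ y z : V, T1 P F P.xi y z = T1 P F P.xi z y) ∧
    (∀ y z : V, T1 P F P.xi y z = -T1 P F P.xi (P.phi y) (P.phi z)) := by
  refine ⟨fun x y z => ?_, fun y z => ?_, fun y z => ?_⟩
  · rw [h9.T1_eq, h9.T1_xi_left, h9.T1_xi_left]
    ring
  · rw [h9.T1_xi_left, h9.T1_xi_left, h9.apply_phi_xi_comm]
  · rw [h9.T1_xi_left, h9.T1_xi_left, h9.2.2 y (P.phi z), neg_neg]

/-- characterisation of the torsion `T¹` in the class F₉. -/
theorem classF9_T1_properties
    [FiniteDimensional ℝ V] (n : ℕ) (hn : 1 ≤ n)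
    (hdim : Module.finrank ℝ V = 2 * n + 1)
    (P : PiStruct V) (F : Tri V) (hF : IsFund P F)
    (h9 : ClassF9 P F) :
    (∀ x y z : V, T1 P F x y z =
      P.eta x * T1 P F P.xi y z - P.eta y * T1 P F P.xi x z) ∧
    (∀ y z : V, T1 P F P.xi y z = T1 P F P.xi z y) ∧
    (∀ y z : V, T1 P F P.xi y z = -T1 P F P.xi (P.phi y) (P.phi z)) :=
  classF9_T1_properties_general P F h9
end
end

section
/- If the fundamental tensor F satisfies the defining condition of class F₁₀, then the torsion tensor T¹ of the first natural connection satisfies T¹(x,y,z) = η(x)T¹(ξ,y,z) − η(y)T¹(ξ,x,z) and T¹(ξ,y,z) = −T¹(ξ,z,y) = −T¹(ξ,φy,φz) for all x, y, z ∈ V. -/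
open scoped RealInnerProductSpace

noncomputable section

variable {V : Type*} [NormedAddCommGroup V] [InnerProductSpace ℝ V]

/-- The defining condition of the basic class F₁₀. -/
def ClassF10 (P : PiStruct V) (F : Tri V) : Prop :=
  ∀ x y z : V, F x y z = -(P.eta x) * F P.xi (P.phi y) (P.phi z)

/-! In class F₁₀ the tensor `F(x, y, z)` sees `x` only through `η(x)` and vanishes as soon as
`ξ` occupies a slot, so the torsion collapses to
`T¹(x, y, z) = ½ (η(x) F(ξ, y, φz) − η(y) F(ξ, x, φz))`. The first identity is then immediate,
the third is the `φ`-invariance `F(ξ, y, z) = −F(ξ, φy, φz)` read off the defining condition at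
`x = ξ`, and the second combines that invariance with the symmetry of `F` in its last two
arguments. -/

theorem PiStruct.eta_self (P : PiStruct V) : P.eta P.xi = 1 := P.eta_xi

namespace ClassF10

variable {P : PiStruct V} {F : Tri V}

theorem apply_xi (h10 : ClassF10 P F) (y z : V) :
    F P.xi y z = -F P.xi (P.phi y) (P.phi z) := by
  rw [h10, P.eta_self, neg_one_mul]

theorem apply_xi_xi (h10 : ClassF10 P F) (w : V) : F P.xi P.xi w = 0 := by
  rw [h10.apply_xi, P.phi_xi, map_zero, LinearMap.zero_apply, neg_zero]

theorem apply_right_xi (h10 : ClassF10 P F) (x w : V) : F x w P.xi = 0 := by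
  rw [h10, P.phi_xi, map_zero, mul_zero]

theorem apply_xi_phi_phi (h10 : ClassF10 P F) (y w : V) :
    F P.xi (P.phi (P.phi y)) w = F P.xi y w := by
  simp only [P.phi_phi, map_sub, map_smul, LinearMap.sub_apply, LinearMap.smul_apply,
    h10.apply_xi_xi, smul_zero, sub_zero]

theorem apply_phi (h10 : ClassF10 P F) (x y z : V) :
    F x (P.phi y) z = -P.eta x * F P.xi y (P.phi z) := by
  rw [h10, h10.apply_xi_phi_phi]

theorem T1_eq (h10 : ClassF10 P F) (x y z : V) :
    T1 P F x y z = (1 / 2) * (P.eta x * F P.xi y (P.phi z) - P.eta y * F P.xi x (P.phi z)) := by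
  rw [T1, h10.apply_phi x y, h10.apply_phi y x]
  simp only [h10.apply_right_xi]
  ring

theorem T1_xi_left (h10 : ClassF10 P F) (y z : V) :
    T1 P F P.xi y z = (1 / 2) * F P.xi y (P.phi z) := by
  rw [h10.T1_eq, P.eta_self, h10.apply_xi_xi]
  ring

end ClassF10

theorem classF10_T1_properties_general
    (P : PiStruct V) (F : Tri V) (hF : IsFund P F)
    (h10 : ClassF10 P F) :
    (∀ x y z : V, T1 P F x y z =
      P.eta x * T1 P F P.xi y z - P.eta y * T1 P F P.xi x z) ∧
    (∀ y z : V, T1 P F P.xi y z = -T1 P F P.xi z y) ∧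
    (∀ y z : V, T1 P F P.xi y z = -T1 P F P.xi (P.phi y) (P.phi z)) := by
  refine ⟨fun x y z => ?_, fun y z => ?_, fun y z => ?_⟩
  · rw [h10.T1_eq, h10.T1_xi_left, h10.T1_xi_left]
    ring
  · have hantisymm : F P.xi y (P.phi z) = -F P.xi z (P.phi y) := by
      rw [hF.1, h10.apply_phi, P.eta_self, neg_one_mul]
    rw [h10.T1_xi_left, h10.T1_xi_left, hantisymm]
    ring
  · rw [h10.T1_xi_left, h10.T1_xi_left, h10.apply_xi y (P.phi z)]
    ring

/-- characterisation of the torsion `T¹` in the class F₁₀. -/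
theorem classF10_T1_properties
    [FiniteDimensional ℝ V] (n : ℕ) (hn : 1 ≤ n)
    (hdim : Module.finrank ℝ V = 2 * n + 1)
    (P : PiStruct V) (F : Tri V) (hF : IsFund P F)
    (h10 : ClassF10 P F) :
    (∀ x y z : V, T1 P F x y z =
      P.eta x * T1 P F P.xi y z - P.eta y * T1 P F P.xi x z) ∧
    (∀ y z : V, T1 P F P.xi y z = -T1 P F P.xi z y) ∧
    (∀ y z : V, T1 P F P.xi y z = -T1 P F P.xi (P.phi y) (P.phi z)) :=
  classF10_T1_properties_general P F hF h10
end
end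

section
/- The torsion tensor T² of the second natural connection is expressed purely in terms of the fundamental tensor F by: T²(x,y,z) = −(1/2)(F(x,φy,z) − F(y,φx,z)) − (1/2)η(z)(F(x,φy,ξ) − F(y,φx,ξ)) + η(y)F(x,φz,ξ) − η(x)F(y,φz,ξ) − (1/8)(2F(φ(φz),φ(φx),φy) + F(φx,φ(φz),φ(φy)) − F(φy,φ(φz),φ(φx)) − F(φ(φx),φ(φz),φy) + F(φ(φy),φ(φz),φx)) − (1/4)η(x)(F(φ(φz),φy,ξ) − F(φ(φy),φz,ξ) + F(φz,φ(φy),ξ) − F(φy,φ(φz),ξ)) + (1/4)η(y)(F(φ(φz),φx,ξ) − F(φ(φx),φz,ξ) + F(φz,φ(φx),ξ) − F(φx,φ(φz),ξ)) for all x, y, z ∈ V. -/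
open scoped RealInnerProductSpace

noncomputable section

variable {V : Type*} [NormedAddCommGroup V] [InnerProductSpace ℝ V]

/-- the torsion `T²` of the second natural connection expressed purely in
terms of the fundamental tensor `F`. -/
theorem T2_in_terms_of_F
    [FiniteDimensional ℝ V] (n : ℕ) (hn : 1 ≤ n)
    (hdim : Module.finrank ℝ V = 2 * n + 1)
    (P : PiStruct V) (F : Tri V) (hF : IsFund P F) :
    ∀ x y z : V, T2 P F x y z =
      -(1/2) * (F x (P.phi y) z - F y (P.phi x) z)
      - (1/2) * P.eta z * (F x (P.phi y) P.xi - F y (P.phi x) P.xi)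
      + P.eta y * F x (P.phi z) P.xi - P.eta x * F y (P.phi z) P.xi
      - (1/8) * (2 * F (P.phi (P.phi z)) (P.phi (P.phi x)) (P.phi y)
          + F (P.phi x) (P.phi (P.phi z)) (P.phi (P.phi y))
          - F (P.phi y) (P.phi (P.phi z)) (P.phi (P.phi x))
          - F (P.phi (P.phi x)) (P.phi (P.phi z)) (P.phi y)
          + F (P.phi (P.phi y)) (P.phi (P.phi z)) (P.phi x))
      - (1/4) * P.eta x * (F (P.phi (P.phi z)) (P.phi y) P.xi
          - F (P.phi (P.phi y)) (P.phi z) P.xi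
          + F (P.phi z) (P.phi (P.phi y)) P.xi
          - F (P.phi y) (P.phi (P.phi z)) P.xi)
      + (1/4) * P.eta y * (F (P.phi (P.phi z)) (P.phi x) P.xi
          - F (P.phi (P.phi x)) (P.phi z) P.xi
          + F (P.phi z) (P.phi (P.phi x)) P.xi
          - F (P.phi x) (P.phi (P.phi z)) P.xi) := by
  intro x y z
  obtain ⟨hsym, hfund⟩ := hF
  have hφ3 : ∀ w : V, P.phi (P.phi (P.phi w)) = P.phi w := fun w => by
    rw [P.phi_phi (P.phi w), P.eta_phi, zero_smul, sub_zero]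
  have hηφφ : ∀ w : V, PiStruct.eta P (P.phi (P.phi w)) = 0 := fun w => by
    simp [PiStruct.eta, P.phi_phi, inner_sub_left, real_inner_smul_left, P.eta_xi]
    rw [← real_inner_self_eq_norm_sq, P.eta_xi]; ring
  have hηξ : PiStruct.eta P P.xi = 1 := P.eta_xi
  have key : ∀ a b : V,
      F (P.phi (P.phi z)) (P.phi (P.phi a)) (P.phi b)
        = - F (P.phi (P.phi z)) (P.phi (P.phi b)) (P.phi a) := by
    intro a b
    have h := hfund (P.phi (P.phi z)) (P.phi (P.phi b)) (P.phi a)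
    rw [hφ3, hηφφ, show PiStruct.eta P (P.phi a) = 0 from P.eta_phi a] at h
    have hs := hsym (P.phi (P.phi z)) (P.phi (P.phi a)) (P.phi b)
    linarith [h, hs]
  have hkey := key y x
  simp only [T2, Q2, Q1, Nij, hφ3, hηφφ, hηξ, P.phi_xi, map_zero,
    LinearMap.zero_apply]
  have hs2 := hsym (P.phi z) (P.phi (P.phi y)) (P.phi (P.phi x))
  linarith [hkey, hs2]
end
end

section
/- If the fundamental tensor F satisfies the defining condition of class F₃, then the torsion tensor of the second natural connection is T²(x,y,z) = −(1/4) N(φ(φx), φ(φy), φ(φz)) for all x, y, z ∈ V, where N is the Nijenhuis tensor of F. -/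
open scoped RealInnerProductSpace

noncomputable section

variable {V : Type*} [NormedAddCommGroup V] [InnerProductSpace ℝ V]

/-- The defining condition of the basic class F₃. -/
def ClassF3 (P : PiStruct V) (F : Tri V) : Prop :=
  (∀ y z : V, F P.xi y z = 0) ∧ (∀ x z : V, F x P.xi z = 0) ∧
  (∀ x y z : V, F x y z + F y z x + F z x y = 0)

/-! In class F₃ every ξ-component of `F` vanishes, so `φ²` acts as the identity in each slot
and `G(x, y, z) = F(x, φy, z)` is skew in `y, z`. The cyclic identity then expresses
`F(φx, y, z) = -G(y, x, z) - G(z, x, y)`, and both `T²(x, y, z)` and `N(φ²x, φ²y, φ²z)` reduce to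
multiples of `G(x, y, z) - G(y, x, z) - G(z, x, y)`. -/

theorem PiStruct.eta_apply_phi (P : PiStruct V) (x : V) : P.eta (P.phi x) = 0 :=
  P.eta_phi x

theorem PiStruct.phi_phi_phi_s16 (P : PiStruct V) (x : V) : P.phi (P.phi (P.phi x)) = P.phi x := by
  rw [P.phi_phi (P.phi x), P.eta_phi, zero_smul, sub_zero]

namespace ClassF3

variable {P : PiStruct V} {F : Tri V}

theorem apply_xi_right (hF : IsFund P F) (h3 : ClassF3 P F) (x y : V) : F x y P.xi = 0 :=
  (hF.1 x y P.xi).trans (h3.2.1 x y)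

theorem apply_phi_phi_left (h3 : ClassF3 P F) (x y z : V) :
    F (P.phi (P.phi x)) y z = F x y z := by
  simp [P.phi_phi, h3.1]

theorem apply_phi_phi_mid (h3 : ClassF3 P F) (x y z : V) :
    F x (P.phi (P.phi y)) z = F x y z := by
  simp [P.phi_phi, h3.2.1]

theorem apply_phi_phi_right (hF : IsFund P F) (h3 : ClassF3 P F) (x y z : V) :
    F x y (P.phi (P.phi z)) = F x y z := by
  simp [P.phi_phi, apply_xi_right hF h3]

theorem apply_phi_mid (hF : IsFund P F) (h3 : ClassF3 P F) (x y z : V) :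
    F x (P.phi y) z = -F x y (P.phi z) := by
  have h := hF.2 x (P.phi y) z
  rwa [apply_phi_phi_mid h3, P.eta_apply_phi, apply_xi_right hF h3, zero_mul, mul_zero,
    add_zero, add_zero] at h

theorem apply_phi_mid_comm (hF : IsFund P F) (h3 : ClassF3 P F) (x y z : V) :
    F x (P.phi y) z = -F x (P.phi z) y := by
  rw [apply_phi_mid hF h3, hF.1]

theorem apply_phi_left (hF : IsFund P F) (h3 : ClassF3 P F) (x y z : V) :
    F (P.phi x) y z = -F y (P.phi x) z - F z (P.phi x) y := by
  have hcyc := h3.2.2 (P.phi x) y z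
  rw [hF.1 y z] at hcyc
  linarith

theorem nij_xi_right (hF : IsFund P F) (h3 : ClassF3 P F) (x y : V) : Nij P F x y P.xi = 0 := by
  simp [Nij, P.phi_xi, apply_xi_right hF h3]

theorem nij_phi_phi (hF : IsFund P F) (h3 : ClassF3 P F) (x y z : V) :
    Nij P F (P.phi (P.phi x)) (P.phi (P.phi y)) (P.phi (P.phi z)) =
      2 * (F x (P.phi y) z - F y (P.phi x) z - F z (P.phi x) y) := by
  simp only [Nij, P.phi_phi_phi_s16, P.eta_apply_phi, zero_mul, add_zero, apply_phi_phi_left h3,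
    apply_phi_phi_mid h3, apply_phi_phi_right hF h3]
  rw [apply_phi_left hF h3 x, apply_phi_left hF h3 y]
  linarith [apply_phi_mid hF h3 x y z, apply_phi_mid hF h3 y x z, apply_phi_mid_comm hF h3 z y x]

theorem Q1_eq (hF : IsFund P F) (h3 : ClassF3 P F) (x y z : V) :
    Q1 P F x y z = -(1/2) * F x (P.phi y) z := by
  simp [Q1, apply_xi_right hF h3]

theorem Q2_eq (hF : IsFund P F) (h3 : ClassF3 P F) (x y z : V) :
    Q2 P F x y z = -(1/2) * F x (P.phi y) z
      - (1/4) * (F z (P.phi y) x - F y (P.phi z) x - F x (P.phi z) y) := by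
  rw [Q2, Q1_eq hF h3, nij_phi_phi hF h3, nij_xi_right hF h3]
  ring

end ClassF3

theorem classF3_T2_formula_general
    (P : PiStruct V) (F : Tri V) (hF : IsFund P F)
    (h3 : ClassF3 P F) :
    ∀ x y z : V, T2 P F x y z =
      -(1/4) * Nij P F (P.phi (P.phi x)) (P.phi (P.phi y)) (P.phi (P.phi z)) := by
  intro x y z
  rw [T2, ClassF3.Q2_eq hF h3, ClassF3.Q2_eq hF h3, ClassF3.nij_phi_phi hF h3,
    ClassF3.apply_phi_mid_comm hF h3 z y x]
  ring

/-- in the class F₃ the torsion of the second natural connection is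
`T²(x,y,z) = −(1/4) N(φ²x, φ²y, φ²z)`. -/
theorem classF3_T2_formula
    [FiniteDimensional ℝ V] (n : ℕ) (hn : 1 ≤ n)
    (hdim : Module.finrank ℝ V = 2 * n + 1)
    (P : PiStruct V) (F : Tri V) (hF : IsFund P F)
    (h3 : ClassF3 P F) :
    ∀ x y z : V, T2 P F x y z =
      -(1/4) * Nij P F (P.phi (P.phi x)) (P.phi (P.phi y)) (P.phi (P.phi z)) :=
  classF3_T2_formula_general P F hF h3
end
end

section
/- Suppose the fundamental tensor F decomposes as F = F' + F'', where F' and F'' are fundamental tensors satisfying the defining conditions of classes F₃ and F₇ respectively (so F belongs to the class Û₀ = F₃ ⊕ F₇). Then the torsion tensor of the second natural connection of F is T²(x,y,z) = −(1/4) N(φ(φx), φ(φy), φ(φz)) + (F(y,φx,ξ) − F(x,φy,ξ)) η(z) for all x, y, z ∈ V, where N is the Nijenhuis tensor of F. -/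
open scoped RealInnerProductSpace

noncomputable section

variable {V : Type*} [NormedAddCommGroup V] [InnerProductSpace ℝ V]

/-- The defining condition of the basic class F₇. -/
def ClassF7 (P : PiStruct V) (F : Tri V) : Prop :=
  (∀ x y z : V, F x y z = F x y P.xi * P.eta z + F x z P.xi * P.eta y) ∧
  (∀ x y : V, F x y P.xi = -F y x P.xi) ∧
  (∀ x y : V, F x y P.xi = F (P.phi x) (P.phi y) P.xi)

/-- if `F = F' + F''` with `F'` in the class F₃ and `F''` in the class F₇
(so `F` belongs to `Û₀ = F₃ ⊕ F₇`), then the torsion of the second natural connection is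
`T²(x,y,z) = −(1/4) N(φ²x, φ²y, φ²z) + (F(y,φx,ξ) − F(x,φy,ξ)) η(z)`. -/
theorem classU0hat_T2_formula
    [FiniteDimensional ℝ V] (n : ℕ) (hn : 1 ≤ n)
    (hdim : Module.finrank ℝ V = 2 * n + 1)
    (P : PiStruct V) (F F' F'' : Tri V)
    (hsum : F = F' + F'')
    (hF' : IsFund P F') (h3 : ClassF3 P F')
    (hF'' : IsFund P F'') (h7 : ClassF7 P F'') :
    ∀ x y z : V, T2 P F x y z =
      -(1/4) * Nij P F (P.phi (P.phi x)) (P.phi (P.phi y)) (P.phi (P.phi z))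
      + (F y (P.phi x) P.xi - F x (P.phi y) P.xi) * P.eta z := by
  intro x y z
  subst hsum
  obtain ⟨fsym, ffund⟩ := hF'
  obtain ⟨hA1, hA2, hcyc⟩ := h3
  obtain ⟨hexp, hanti, hphi⟩ := h7
  have hA3 : ∀ u v : V, F' u v P.xi = 0 := fun u v => (fsym u v P.xi).trans (hA2 u v)
  have heta_phi : ∀ u : V, P.eta (P.phi u) = 0 := P.eta_phi
  have heta_xi : P.eta P.xi = 1 := P.eta_xi
  have heta_sub : ∀ u w : V, P.eta (u - w) = P.eta u - P.eta w := fun u w => inner_sub_left u w _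
  have heta_smul : ∀ (r : ℝ) (u : V), P.eta (r • u) = r * P.eta u := fun r u => real_inner_smul_left u _ r
  obtain ⟨f, hf⟩ : ∃ f : V → V → ℝ, ∀ u v, F'' u v P.xi = f u v := ⟨fun u v => F'' u v P.xi, fun _ _ => rfl⟩
  have hfxi : ∀ u : V, f u P.xi = 0 := by
    intro u; rw [← hf, hphi, P.phi_xi]; simp
  have hfxi' : ∀ u : V, f P.xi u = 0 := by
    intro u; rw [← hf, hanti, hf, hfxi]; ring
  have hfanti : ∀ u v : V, f u v = -f v u := by intro u v; rw [← hf, ← hf]; exact hanti u v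
  have hfphi : ∀ u v : V, f (P.phi u) (P.phi v) = f u v := by
    intro u v; rw [← hf, ← hf]; exact (hphi u v).symm
  have hfmove : ∀ u v : V, f u (P.phi v) = f (P.phi u) v := by
    intro u v
    have := hfphi u (P.phi v)
    rw [P.phi_phi] at this
    rw [← this, ← hf, map_sub, map_smul]
    simp [hf, hfxi, smul_eq_mul]
  have hexp' : ∀ u v w : V, F'' u v w = f u v * P.eta w + f u w * P.eta v := by
    intro u v w; rw [hexp u v w, hf, hf]
  simp only [T2, Q2, Q1, Nij, LinearMap.add_apply, P.phi_phi, P.phi_xi, map_sub, map_smul,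
    map_zero, LinearMap.sub_apply, LinearMap.smul_apply, LinearMap.zero_apply, smul_eq_mul,
    heta_sub, heta_smul, heta_phi, heta_xi, hA1, hA2, hA3, hexp', hfxi, hfxi', hfphi, hfmove,
    mul_zero, zero_mul, mul_one, one_mul, sub_zero, zero_sub, add_zero, zero_add, neg_zero,
    sub_self, neg_neg]
  have hmove : ∀ u v w : V, F' u (P.phi v) w = -F' u v (P.phi w) := by
    intro u v w
    have h1 := ffund u (P.phi v) w
    rw [P.phi_phi, heta_phi, map_sub, map_smul] at h1
    simp only [hA2, hA3, smul_eq_mul, LinearMap.sub_apply, LinearMap.smul_apply] at h1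
    rw [h1]; ring
  have hmove1 : ∀ u v w : V, F' (P.phi u) v w = -F' v w (P.phi u) - F' w (P.phi u) v := by
    intro u v w
    have := hcyc (P.phi u) v w
    linarith
  have heq : ∀ u : V, (inner ℝ u P.xi : ℝ) = P.eta u := fun u => rfl
  simp only [heq, hmove1, hmove]
  have e1 : f (P.phi y) x = - f (P.phi x) y := by rw [hfanti, hfmove]
  have e2 : f (P.phi z) x = - f (P.phi x) z := by rw [hfanti, hfmove]
  have e3 : f (P.phi z) y = - f (P.phi y) z := by rw [hfanti, hfmove]
  have s1 : F' x z (P.phi y) = - F' x y (P.phi z) := by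
    rw [fsym x z (P.phi y), hmove, fsym]
  have s2 : F' y z (P.phi x) = - F' y x (P.phi z) := by
    rw [fsym y z (P.phi x), hmove, fsym]
  have s3 : F' z y (P.phi x) = - F' z x (P.phi y) := by
    rw [fsym z y (P.phi x), hmove, fsym]
  simp only [e1, e2, e3, s1, s2, s3]
  ring_nf
end
end

section
/- For the 5-dimensional Lie algebra example: (φ, ξ, η, g) as defined in the context is a Riemannian Π-structure on ℝ⁵; the tensor F(x,y,z) = g(∇ₓ(φy) − φ(∇ₓy), z), where ∇ is the bilinear map determined by the Koszul formula 2g(∇ₓy, z) = g([x,y], z) − g([y,z], x) + g([z,x], y), is a fundamental tensor satisfying the defining condition of class F₇, i.e. F(x,y,z) = F(x,y,ξ)η(z) + F(x,z,ξ)η(y) and F(x,y,ξ) = −F(y,x,ξ) = F(φx,φy,ξ) for all x, y, z; moreover, for the torsion tensor T¹ of the first natural connection and the torsion tensor T² of the second natural connection of this F, all six torsion forms vanish: ṫ = ṫ* = t̂¹ = 0 and ẗ = ẗ* = t̂² = 0. -/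
open scoped RealInnerProductSpace

noncomputable section

/-- Euclidean 5-space with its standard inner product. -/
abbrev E5 := EuclideanSpace ℝ (Fin 5)

/-- the 5-dimensional Lie-algebra example. With the bracket determined by
the commutation relations, `(φ, ξ, η, g)` is a Riemannian Π-structure on ℝ⁵; the tensor
`F(x,y,z) = g(∇ₓ(φy) − φ(∇ₓy), z)` (with `∇` given by the Koszul formula) is a
fundamental tensor of class F₇, and all six torsion forms of `T¹` and `T²` vanish. -/
theorem five_dim_example
    (l1 l2 l3 l4 m1 m2 : ℝ)
    (e : Fin 5 → E5) (he : ∀ i, e i = EuclideanSpace.single i (1 : ℝ))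
    (br : E5 →ₗ[ℝ] E5 →ₗ[ℝ] E5)
    (hskew : ∀ x y : E5, br x y = -br y x)
    (h12 : br (e 1) (e 2) =
      l1 • e 1 + l2 • e 2 + l3 • e 3 + l4 • e 4 + (2 * m1) • e 0)
    (h34 : br (e 3) (e 4) =
      l1 • e 1 + l2 • e 2 + l3 • e 3 + l4 • e 4 + (2 * m1) • e 0)
    (h14 : br (e 1) (e 4) =
      l3 • e 1 + l4 • e 2 + l1 • e 3 + l2 • e 4 + (2 * m2) • e 0)
    (h23 : br (e 2) (e 3) =
      -(l3 • e 1 + l4 • e 2 + l1 • e 3 + l2 • e 4 + (2 * m2) • e 0))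
    (h0 : ∀ j : Fin 5, br (e 0) (e j) = 0)
    (h13 : br (e 1) (e 3) = 0)
    (h24 : br (e 2) (e 4) = 0)
    (φ : E5 →ₗ[ℝ] E5)
    (hφ0 : φ (e 0) = 0) (hφ1 : φ (e 1) = e 3) (hφ2 : φ (e 2) = e 4)
    (hφ3 : φ (e 3) = e 1) (hφ4 : φ (e 4) = e 2)
    (ξ : E5) (hξ : ξ = e 0)
    (η : E5 → ℝ) (hη : ∀ x : E5, η x = ⟪x, ξ⟫)
    (nab : E5 → E5 → E5)
    (hKoszul : ∀ x y z : E5,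
      2 * ⟪nab x y, z⟫ = ⟪br x y, z⟫ - ⟪br y z, x⟫ + ⟪br z x, y⟫)
    (F : E5 → E5 → E5 → ℝ)
    (hF : ∀ x y z : E5, F x y z = ⟪nab x (φ y) - φ (nab x y), z⟫)
    (N : E5 → E5 → E5 → ℝ)
    (hN : ∀ x y z : E5, N x y z =
      F (φ x) y z - F (φ y) x z - F x y (φ z) + F y x (φ z)
        + η z * (F x (φ y) ξ - F y (φ x) ξ))
    (T1 : E5 → E5 → E5 → ℝ)
    (hT1 : ∀ x y z : E5, T1 x y z =
      -(1/2) * (F x (φ y) z - F y (φ x) z)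
        - (1/2) * η z * (F x (φ y) ξ - F y (φ x) ξ)
        + η y * F x (φ z) ξ - η x * F y (φ z) ξ)
    (Q1 : E5 → E5 → E5 → ℝ)
    (hQ1 : ∀ x y z : E5, Q1 x y z =
      -(1/2) * F x (φ y) z - (1/2) * η z * F x (φ y) ξ + η y * F x (φ z) ξ)
    (Q2 : E5 → E5 → E5 → ℝ)
    (hQ2 : ∀ x y z : E5, Q2 x y z =
      Q1 x y z - (1/8) * (N (φ (φ z)) (φ (φ y)) (φ (φ x)) + 2 * η x * N (φ z) (φ y) ξ))
    (T2 : E5 → E5 → E5 → ℝ)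
    (hT2 : ∀ x y z : E5, T2 x y z = Q2 x y z - Q2 y x z) :
    -- (1) (φ, ξ, η, g) is a Riemannian Π-structure on ℝ⁵
    (φ ξ = 0 ∧ (∀ x : E5, φ (φ x) = x - η x • ξ) ∧ (∀ x : E5, η (φ x) = 0) ∧
      η ξ = 1 ∧ (∀ x y : E5, ⟪φ x, φ y⟫ = ⟪x, y⟫ - η x * η y) ∧
      (∀ x y : E5, ⟪φ x, y⟫ = ⟪x, φ y⟫)) ∧
    -- (2) F is a fundamental tensor
    ((∀ x y z : E5, F x y z = F x z y) ∧
      (∀ x y z : E5, F x y z = -F x (φ y) (φ z) + η y * F x ξ z + η z * F x y ξ)) ∧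
    -- (3) F satisfies the defining condition of class F₇
    ((∀ x y z : E5, F x y z = F x y ξ * η z + F x z ξ * η y) ∧
      (∀ x y : E5, F x y ξ = -F y x ξ) ∧
      (∀ x y : E5, F x y ξ = F (φ x) (φ y) ξ)) ∧
    -- (4) all six torsion forms vanish
    ((∀ x : E5, (∑ i ∈ ({1, 2, 3, 4} : Finset (Fin 5)), T1 x (e i) (e i)) = 0) ∧
      (∀ x : E5, (∑ i ∈ ({1, 2, 3, 4} : Finset (Fin 5)), T1 x (e i) (φ (e i))) = 0) ∧
      (∀ x : E5, T1 x ξ ξ = 0) ∧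
      (∀ x : E5, (∑ i ∈ ({1, 2, 3, 4} : Finset (Fin 5)), T2 x (e i) (e i)) = 0) ∧
      (∀ x : E5, (∑ i ∈ ({1, 2, 3, 4} : Finset (Fin 5)), T2 x (e i) (φ (e i))) = 0) ∧
      (∀ x : E5, T2 x ξ ξ = 0)) := by
  
  -- coordinate expansion
  have hco : ∀ x : E5, x = x 0 • e 0 + x 1 • e 1 + x 2 • e 2 + x 3 • e 3 + x 4 • e 4 := by
    intro x
    simp only [he]
    ext j
    fin_cases j <;>
      simp [EuclideanSpace.single_apply]
  have hiez : ∀ (i : Fin 5) (z : E5), ⟪e i, z⟫ = z i := by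
    intro i z
    rw [he, EuclideanSpace.inner_single_left]
    simp
  have hipφ : ∀ x z : E5, ⟪φ x, z⟫ = x 3 * z 1 + x 4 * z 2 + x 1 * z 3 + x 2 * z 4 := by
    intro x z
    conv_lhs => rw [hco x]
    simp only [map_add, map_smul, hφ0, hφ1, hφ2, hφ3, hφ4, smul_zero]
    simp only [inner_add_left, real_inner_smul_left, hiez, zero_add]
    ring
  have hsym : ∀ w z : E5, ⟪φ w, z⟫ = ⟪w, φ z⟫ := by
    intro w z
    rw [hipφ w z, real_inner_comm, hipφ z w]
    ring
  have hφ0c : ∀ x : E5, φ x 0 = 0 := by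
    intro x; rw [← hiez 0 (φ x), real_inner_comm, hipφ]
    simp [he, EuclideanSpace.single_apply]
  have hφ1c : ∀ x : E5, φ x 1 = x 3 := by
    intro x; rw [← hiez 1 (φ x), real_inner_comm, hipφ]
    simp [he, EuclideanSpace.single_apply]
  have hφ2c : ∀ x : E5, φ x 2 = x 4 := by
    intro x; rw [← hiez 2 (φ x), real_inner_comm, hipφ]
    simp [he, EuclideanSpace.single_apply]
  have hφ3c : ∀ x : E5, φ x 3 = x 1 := by
    intro x; rw [← hiez 3 (φ x), real_inner_comm, hipφ]
    simp [he, EuclideanSpace.single_apply]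
  have hφ4c : ∀ x : E5, φ x 4 = x 2 := by
    intro x; rw [← hiez 4 (φ x), real_inner_comm, hipφ]
    simp [he, EuclideanSpace.single_apply]
  have hηc : ∀ x : E5, η x = x 0 := by
    intro x; rw [hη, hξ, real_inner_comm, hiez]
  -- bracket reversed values
  have hdiag : ∀ v : E5, br v v = 0 := by
    intro v
    have h := hskew v v
    have h2 : (2 : ℝ) • br v v = 0 := by
      rw [two_smul]; nth_rewrite 1 [h]; simp
    exact (smul_eq_zero.mp h2).resolve_left (by norm_num)
  have h21 : br (e 2) (e 1) =
      -(l1 • e 1 + l2 • e 2 + l3 • e 3 + l4 • e 4 + (2 * m1) • e 0) := by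
    rw [hskew, h12]
  have h43 : br (e 4) (e 3) =
      -(l1 • e 1 + l2 • e 2 + l3 • e 3 + l4 • e 4 + (2 * m1) • e 0) := by
    rw [hskew, h34]
  have h41 : br (e 4) (e 1) =
      -(l3 • e 1 + l4 • e 2 + l1 • e 3 + l2 • e 4 + (2 * m2) • e 0) := by
    rw [hskew, h14]
  have h32 : br (e 3) (e 2) =
      l3 • e 1 + l4 • e 2 + l1 • e 3 + l2 • e 4 + (2 * m2) • e 0 := by
    rw [hskew, h23, neg_neg]
  have h31 : br (e 3) (e 1) = 0 := by rw [hskew, h13, neg_zero]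
  have h42 : br (e 4) (e 2) = 0 := by rw [hskew, h24, neg_zero]
  have hj0 : ∀ j : Fin 5, br (e j) (e 0) = 0 := by
    intro j; rw [hskew, h0, neg_zero]
  have hipbr : ∀ x y z : E5, ⟪br x y, z⟫ =
      (x 1 * y 2 - x 2 * y 1 + x 3 * y 4 - x 4 * y 3) *
        (l1 * z 1 + l2 * z 2 + l3 * z 3 + l4 * z 4 + 2 * m1 * z 0) +
      (x 1 * y 4 - x 4 * y 1 - x 2 * y 3 + x 3 * y 2) *
        (l3 * z 1 + l4 * z 2 + l1 * z 3 + l2 * z 4 + 2 * m2 * z 0) := by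
    intro x y z
    conv_lhs => rw [hco x, hco y]
    simp only [map_add, map_smul, LinearMap.add_apply, LinearMap.smul_apply,
      h12, h34, h14, h23, h13, h24, h21, h43, h41, h32, h31, h42, h0, hj0,
      hdiag (e 0), hdiag (e 1), hdiag (e 2), hdiag (e 3), hdiag (e 4),
      smul_zero, add_zero, zero_add, smul_neg]
    simp only [inner_add_left, inner_neg_left, real_inner_smul_left, hiez, smul_eq_mul]
    ring
  have hFc : ∀ x y z : E5, F x y z =
      (m2 * (x 1 * y 2 - x 2 * y 1 + x 3 * y 4 - x 4 * y 3) +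
        m1 * (x 1 * y 4 - x 4 * y 1 - x 2 * y 3 + x 3 * y 2)) * z 0 +
      (m2 * (x 1 * z 2 - x 2 * z 1 + x 3 * z 4 - x 4 * z 3) +
        m1 * (x 1 * z 4 - x 4 * z 1 - x 2 * z 3 + x 3 * z 2)) * y 0 := by
    intro x y z
    have h1 := hKoszul x (φ y) z
    have h2 := hKoszul x y (φ z)
    simp only [hipbr, hφ0c, hφ1c, hφ2c, hφ3c, hφ4c] at h1 h2
    rw [hF, inner_sub_left, hsym]
    linear_combination h1 / 2 - h2 / 2
  have hξ0 : ξ 0 = 1 := by rw [hξ, he]; simp [EuclideanSpace.single_apply]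
  have hξ1 : ξ 1 = 0 := by rw [hξ, he]; simp [EuclideanSpace.single_apply]
  have hξ2 : ξ 2 = 0 := by rw [hξ, he]; simp [EuclideanSpace.single_apply]
  have hξ3 : ξ 3 = 0 := by rw [hξ, he]; simp [EuclideanSpace.single_apply]
  have hξ4 : ξ 4 = 0 := by rw [hξ, he]; simp [EuclideanSpace.single_apply]
  have hNc : ∀ x y z : E5, N x y z =
      4 * (m1 * (x 1 * y 2 - x 2 * y 1 + x 3 * y 4 - x 4 * y 3) +
        m2 * (x 1 * y 4 - x 4 * y 1 - x 2 * y 3 + x 3 * y 2)) * z 0 := by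
    intro x y z
    simp only [hN, hFc, hηc, hφ0c, hφ1c, hφ2c, hφ3c, hφ4c, hξ0, hξ1, hξ2, hξ3, hξ4]
    ring
  have hT1c : ∀ x y z : E5, T1 x y z =
      m1 * (-(x 0 * y 1 * z 2) + x 0 * y 2 * z 1 - x 0 * y 3 * z 4 + x 0 * y 4 * z 3
        + x 1 * y 0 * z 2 - 2 * x 1 * y 2 * z 0 - x 2 * y 0 * z 1 + 2 * x 2 * y 1 * z 0
        + x 3 * y 0 * z 4 - 2 * x 3 * y 4 * z 0 - x 4 * y 0 * z 3 + 2 * x 4 * y 3 * z 0)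
      + m2 * (-(x 0 * y 1 * z 4) + x 0 * y 2 * z 3 - x 0 * y 3 * z 2 + x 0 * y 4 * z 1
        + x 1 * y 0 * z 4 - 2 * x 1 * y 4 * z 0 - x 2 * y 0 * z 3 + 2 * x 2 * y 3 * z 0
        + x 3 * y 0 * z 2 - 2 * x 3 * y 2 * z 0 - x 4 * y 0 * z 1 + 2 * x 4 * y 1 * z 0) := by
    intro x y z
    simp only [hT1, hFc, hηc, hφ0c, hφ1c, hφ2c, hφ3c, hφ4c, hξ0, hξ1, hξ2, hξ3, hξ4]
    ring
  have hT2c : ∀ x y z : E5, T2 x y z =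
      -2 * (m1 * (x 1 * y 2 - x 2 * y 1 + x 3 * y 4 - x 4 * y 3) +
        m2 * (x 1 * y 4 - x 4 * y 1 - x 2 * y 3 + x 3 * y 2)) * z 0 := by
    intro x y z
    simp only [hT2, hQ2, hQ1, hNc, hFc, hηc, hφ0c, hφ1c, hφ2c, hφ3c, hφ4c,
      hξ0, hξ1, hξ2, hξ3, hξ4]
    ring
  have hsum : ∀ f : Fin 5 → ℝ,
      (∑ i ∈ ({1, 2, 3, 4} : Finset (Fin 5)), f i) = f 1 + f 2 + f 3 + f 4 := by
    intro f
    show (∑ i ∈ insert 1 (insert 2 (insert 3 ({4} : Finset (Fin 5)))), f i) = _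
    rw [Finset.sum_insert (by decide), Finset.sum_insert (by decide),
      Finset.sum_insert (by decide), Finset.sum_singleton]
    ring
  refine ⟨⟨?_, ?_, ?_, ?_, ?_, ?_⟩, ⟨?_, ?_⟩, ⟨?_, ?_, ?_⟩, ⟨?_, ?_, ?_, ?_, ?_, ?_⟩⟩
  · rw [hξ, hφ0]
  · intro x
    ext j
    have hx : ∀ j : Fin 5, (x - η x • ξ) j = x j - η x * ξ j := by
      intro j; simp [PiLp.sub_apply, PiLp.smul_apply]
    fin_cases j <;>
      simp [hφ0c, hφ1c, hφ2c, hφ3c, hφ4c, hx, hηc, hξ0, hξ1, hξ2, hξ3, hξ4]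
  · intro x; rw [hηc, hφ0c]
  · rw [hηc, hξ0]
  · intro x y
    rw [hipφ, hηc, hηc]
    have hxy : ⟪x, y⟫ = x 0 * y 0 + x 1 * y 1 + x 2 * y 2 + x 3 * y 3 + x 4 * y 4 := by
      rw [PiLp.inner_apply, Fin.sum_univ_five]
      simp [RCLike.inner_apply]
      ring
    rw [hxy]
    simp only [hφ0c, hφ1c, hφ2c, hφ3c, hφ4c]
    ring
  · exact hsym
  · intro x y z; simp only [hFc]; ring
  · intro x y z
    simp only [hFc, hηc, hφ0c, hφ1c, hφ2c, hφ3c, hφ4c, hξ0, hξ1, hξ2, hξ3, hξ4]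
    ring
  · intro x y z
    simp only [hFc, hηc, hξ0, hξ1, hξ2, hξ3, hξ4]
    ring
  · intro x y
    simp only [hFc, hξ0, hξ1, hξ2, hξ3, hξ4]
    ring
  · intro x y
    simp only [hFc, hφ0c, hφ1c, hφ2c, hφ3c, hφ4c, hξ0, hξ1, hξ2, hξ3, hξ4]
    ring
  · intro x
    rw [hsum]
    simp only [hT1c, hφ0c, hφ1c, hφ2c, hφ3c, hφ4c, he]
    simp [EuclideanSpace.single_apply]
    try ring
  · intro x
    rw [hsum]
    simp only [hT1c, hφ0c, hφ1c, hφ2c, hφ3c, hφ4c, he]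
    simp [EuclideanSpace.single_apply]
    try ring
  · intro x
    simp only [hT1c, hξ0, hξ1, hξ2, hξ3, hξ4]
    ring
  · intro x
    rw [hsum]
    simp only [hT2c, hφ0c, hφ1c, hφ2c, hφ3c, hφ4c, he]
    simp [EuclideanSpace.single_apply]
    try ring
  · intro x
    rw [hsum]
    simp only [hT2c, hφ0c, hφ1c, hφ2c, hφ3c, hφ4c, he]
    simp [EuclideanSpace.single_apply]
    try ring
  · intro x
    simp only [hT2c, hξ0, hξ1, hξ2, hξ3, hξ4]
    ring
end
end
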